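/- For every α > 0 there exist constants C > 0 and A₀ > 0 (depending only on α) such that: for all m ≥ 0 and all A ≥ A₀ with 16πm² ≤ A and m ≤ α A^(1/2), one has | Vol_m(√(A/4π)) − ( (1/2)A − π log A + V_m + π(1 + log π) − 8π^(3/2) m A^(−1/2) ) | ≤ C A^(−1). The point is that the error bound C A^(−1) is uniform in m in the stated range. -/

import Mathlib

open Real MeasureTheory Filter

/-- Volume of the centered coordinate ball of radius `R` in hyperbolic space. -/
noncomputable def hypVol (R : ℝ) : ℝ :=
  4 * π * ∫ s in (0:ℝ)..R, s ^ 2 / Real.sqrt (1 + s ^ 2)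

/-- Volume of the centered coordinate ball of radius `R` in
Schwarzschild-anti-deSitter of mass `m`. -/
noncomputable def sAdSVol (m R : ℝ) : ℝ :=
  4 * π * ∫ s in (2 * m)..R, s ^ 2 / Real.sqrt (1 + s ^ 2 - 2 * m / s)

/-- The renormalized volume `V_m = lim_{R→∞} (Vol_m(R) - Vol₀(R))` of
Schwarzschild-anti-deSitter of mass `m`. -/
noncomputable def renormVol (m : ℝ) : ℝ :=
  limUnder atTop (fun R => sAdSVol m R - hypVol R)

/-!
With `f_m(s) = s² (1 + s² - 2m/s)^(-1/2)`, the excess `f_m - f_0 = 2ms / (uv(u + v))`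
(`u`, `v` the two square roots) is nonnegative and at most `2m / (1 + s²)`, so it is integrable
on `(2m, ∞)` and `Vol_m(R) = Vol_0(R) + V_m - 4π ∫_R^∞ (f_m - f_0)`.
The hyperbolic volume has the closed form `2π (R √(1 + R²) - arsinh R)`, which gives
`2πR² + π - 2π log (2R)` up to `O(R⁻²)`. Up to a term quadratic in `m`, the excess is
`ms (1 + s²)^(-3/2)`, whose tail integral is `m / √(1 + R²) = m/R + O(m R⁻³)`; the quadratic
remainder is at most `4m² s⁻⁵`, contributing `m² R⁻⁴`. For `A = 4πR²` and `m ≤ α √A`, `m/R` is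
bounded by `2√π α`, so all errors are `O(R⁻²) = O(A⁻¹)` uniformly in `m`.
-/

open Set Topology

lemma continuous_sq_div_sqrt_one_add_sq : Continuous fun s : ℝ => s ^ 2 / √(1 + s ^ 2) :=
  Continuous.div (by fun_prop) (by fun_prop) fun s => (sqrt_pos.2 (by positivity)).ne'

lemma hasDerivAt_sqrt_one_add_sq (x : ℝ) :
    HasDerivAt (fun s : ℝ => √(1 + s ^ 2)) (x / √(1 + x ^ 2)) x := by
  have h := ((hasDerivAt_pow 2 x).const_add 1).sqrt (by positivity)
  convert h using 1
  field_simp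
  norm_num
  ring

lemma hasDerivAt_mul_sqrt_one_add_sq_sub_arsinh (x : ℝ) :
    HasDerivAt (fun s : ℝ => (s * √(1 + s ^ 2) - arsinh s) / 2) (x ^ 2 / √(1 + x ^ 2)) x := by
  have h := (((hasDerivAt_id x).mul (hasDerivAt_sqrt_one_add_sq x)).sub
    (hasDerivAt_arsinh x)).div_const 2
  refine h.congr_deriv ?_
  have hw : √(1 + x ^ 2) ^ 2 = 1 + x ^ 2 := sq_sqrt (by positivity)
  field_simp
  simp only [id]
  linear_combination hw

lemma hypVol_eq (R : ℝ) : hypVol R = 2 * π * (R * √(1 + R ^ 2) - arsinh R) := by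
  rw [hypVol, intervalIntegral.integral_eq_sub_of_hasDerivAt
    (fun x _ => hasDerivAt_mul_sqrt_one_add_sq_sub_arsinh x)
    (continuous_sq_div_sqrt_one_add_sq.intervalIntegrable _ _)]
  simp only [arsinh_zero]
  ring_nf

lemma sqrt_one_add_sq_le {R : ℝ} (hR : 0 < R) : √(1 + R ^ 2) ≤ R + 1 / (2 * R) := by
  rw [sqrt_le_left (by positivity)]
  have : (R + 1 / (2 * R)) ^ 2 = 1 + R ^ 2 + 1 / (4 * R ^ 2) := by field_simp; ring
  rw [this]
  linarith [show 0 < 1 / (4 * R ^ 2) by positivity]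

lemma abs_mul_sqrt_one_add_sq_sub_le {R : ℝ} (hR : 0 < R) :
    |R * √(1 + R ^ 2) - (R ^ 2 + 1 / 2)| ≤ 1 / (8 * R ^ 2) := by
  set w := √(1 + R ^ 2)
  have hw2 : w ^ 2 = 1 + R ^ 2 := sq_sqrt (by positivity)
  have hRw : R ≤ w := le_sqrt_of_sq_le (by linarith)
  have hwR : R * w ≤ R ^ 2 + 1 / 2 :=
    calc R * w ≤ R * (R + 1 / (2 * R)) := by gcongr; exact sqrt_one_add_sq_le hR
      _ = R ^ 2 + 1 / 2 := by field_simp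
  have key : (R ^ 2 + 1 / 2 - R * w) * (R ^ 2 + 1 / 2 + R * w) = 1 / 4 := by
    linear_combination (-R ^ 2) * hw2
  rw [abs_sub_comm, abs_of_nonneg (by linarith), le_div_iff₀ (by positivity)]
  nlinarith [mul_le_mul_of_nonneg_left hRw hR.le]

lemma abs_arsinh_sub_log_le {R : ℝ} (hR : 0 < R) :
    |arsinh R - log (2 * R)| ≤ 1 / (4 * R ^ 2) := by
  have hRw : R ≤ √(1 + R ^ 2) := le_sqrt_of_sq_le (by linarith)
  have hlower : log (2 * R) ≤ arsinh R := by
    rw [arsinh]; exact log_le_log (by positivity) (by linarith)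
  have hupper : arsinh R ≤ log (2 * R) + 1 / (4 * R ^ 2) := by
    have hsum : R + √(1 + R ^ 2) ≤ 2 * R * (1 + 1 / (4 * R ^ 2)) := by
      have : 2 * R * (1 + 1 / (4 * R ^ 2)) = R + (R + 1 / (2 * R)) := by field_simp; ring
      linarith [sqrt_one_add_sq_le hR]
    calc arsinh R ≤ log (2 * R * (1 + 1 / (4 * R ^ 2))) := log_le_log (by positivity) hsum
      _ = log (2 * R) + log (1 + 1 / (4 * R ^ 2)) := log_mul (by positivity) (by positivity)
      _ ≤ log (2 * R) + 1 / (4 * R ^ 2) := by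
        linarith [log_le_sub_one_of_pos (show 0 < 1 + 1 / (4 * R ^ 2) by positivity)]
  rw [abs_le]
  constructor <;> linarith

lemma abs_hypVol_sub_le {R : ℝ} (hR : 0 < R) :
    |hypVol R - (2 * π * R ^ 2 + π - 2 * π * log (2 * R))| ≤ 3 * π / (4 * R ^ 2) := by
  have hsplit : hypVol R - (2 * π * R ^ 2 + π - 2 * π * log (2 * R))
      = 2 * π * (R * √(1 + R ^ 2) - (R ^ 2 + 1 / 2)) - 2 * π * (arsinh R - log (2 * R)) := by
    rw [hypVol_eq]; ring
  calc |hypVol R - (2 * π * R ^ 2 + π - 2 * π * log (2 * R))|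
      ≤ 2 * π * |R * √(1 + R ^ 2) - (R ^ 2 + 1 / 2)| + 2 * π * |arsinh R - log (2 * R)| := by
        rw [hsplit]
        refine (abs_sub _ _).trans_eq ?_
        simp only [abs_mul, abs_two, abs_of_pos pi_pos]
    _ ≤ 2 * π * (1 / (8 * R ^ 2)) + 2 * π * (1 / (4 * R ^ 2)) := by
        gcongr
        exacts [abs_mul_sqrt_one_add_sq_sub_le hR, abs_arsinh_sub_log_le hR]
    _ = 3 * π / (4 * R ^ 2) := by field_simp; ring

lemma abs_inv_sub_inv_sqrt_one_add_sq_le {R : ℝ} (hR : 0 < R) :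
    |1 / R - 1 / √(1 + R ^ 2)| ≤ 1 / (2 * R ^ 3) := by
  set w := √(1 + R ^ 2)
  have hRw : R ≤ w := le_sqrt_of_sq_le (by linarith)
  have hwR : w ≤ R + 1 / (2 * R) := sqrt_one_add_sq_le hR
  have hw : 0 < w := hR.trans_le hRw
  rw [abs_of_nonneg (sub_nonneg.2 (one_div_le_one_div_of_le hR hRw)),
    div_sub_div _ _ hR.ne' hw.ne']
  calc (1 * w - R * 1) / (R * w) ≤ (1 / (2 * R)) / (R * R) := by
        gcongr
        linarith
    _ = 1 / (2 * R ^ 3) := by field_simp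

noncomputable def sAdSDensityExcess (m s : ℝ) : ℝ :=
  s ^ 2 / √(1 + s ^ 2 - 2 * m / s) - s ^ 2 / √(1 + s ^ 2)

lemma sq_le_sAdS_radicand {m s : ℝ} (hs : 2 * m ≤ s) (hspos : 0 < s) :
    s ^ 2 ≤ 1 + s ^ 2 - 2 * m / s := by
  linarith [(div_le_one hspos).2 hs]

lemma sAdS_radicand_pos {m s : ℝ} (hm : 0 ≤ m) (hs : 2 * m ≤ s) :
    0 < 1 + s ^ 2 - 2 * m / s := by
  rcases hm.eq_or_lt with rfl | hm
  · simp only [mul_zero, zero_div, sub_zero]; positivity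
  · have hspos : 0 < s := by linarith
    linarith [sq_le_sAdS_radicand hs hspos, pow_pos hspos 2]

lemma continuousOn_sAdS_density {m : ℝ} (hm : 0 ≤ m) :
    ContinuousOn (fun s => s ^ 2 / √(1 + s ^ 2 - 2 * m / s)) (Ici (2 * m)) := by
  rcases hm.eq_or_lt with rfl | hm
  · simp only [mul_zero, zero_div, sub_zero]
    exact continuous_sq_div_sqrt_one_add_sq.continuousOn
  · refine ContinuousOn.div (by fun_prop) ?_
      fun s hs => (sqrt_pos.2 (sAdS_radicand_pos hm.le hs)).ne'
    refine (continuousOn_const.add (continuous_pow 2).continuousOn).sub ?_ |>.sqrt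
    exact continuousOn_const.div continuousOn_id
      fun s hs => (by linarith [mem_Ici.1 hs] : 0 < s).ne'

lemma le_sqrt_sAdS_radicand {m s : ℝ} (hs : 2 * m ≤ s) (hspos : 0 < s) :
    s ≤ √(1 + s ^ 2 - 2 * m / s) :=
  le_sqrt_of_sq_le (sq_le_sAdS_radicand hs hspos)

lemma sAdSDensityExcess_eq {m s : ℝ} (hs : 2 * m ≤ s) (hspos : 0 < s) :
    sAdSDensityExcess m s = 2 * m * s / (√(1 + s ^ 2 - 2 * m / s) * √(1 + s ^ 2) *
      (√(1 + s ^ 2 - 2 * m / s) + √(1 + s ^ 2))) := by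
  have hu := hspos.trans_le (le_sqrt_sAdS_radicand hs hspos)
  have hv : 0 < √(1 + s ^ 2) := sqrt_pos.2 (by positivity)
  have hu2 : √(1 + s ^ 2 - 2 * m / s) ^ 2 = 1 + s ^ 2 - 2 * m / s :=
    sq_sqrt ((sq_nonneg s).trans (sq_le_sAdS_radicand hs hspos))
  have hv2 : √(1 + s ^ 2) ^ 2 = 1 + s ^ 2 := sq_sqrt (by positivity)
  set u := √(1 + s ^ 2 - 2 * m / s)
  set v := √(1 + s ^ 2)
  have key : s * (v ^ 2 - u ^ 2) = 2 * m := by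
    rw [hu2, hv2]; field_simp; ring
  rw [sAdSDensityExcess, div_sub_div _ _ hu.ne' hv.ne',
    div_eq_div_iff (by positivity) (by positivity)]
  linear_combination (u * v * s) * key

lemma sAdSDensityExcess_nonneg {m s : ℝ} (hm : 0 ≤ m) (hs : 2 * m ≤ s) (hspos : 0 < s) :
    0 ≤ sAdSDensityExcess m s := by
  rw [sAdSDensityExcess_eq hs hspos]
  positivity

lemma sAdSDensityExcess_le {m s : ℝ} (hm : 0 ≤ m) (hs : 2 * m ≤ s) (hspos : 0 < s) :
    sAdSDensityExcess m s ≤ 2 * m / (1 + s ^ 2) := by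
  have hsu := le_sqrt_sAdS_radicand hs hspos
  have hv2 : √(1 + s ^ 2) ^ 2 = 1 + s ^ 2 := sq_sqrt (by positivity)
  rw [sAdSDensityExcess_eq hs hspos]
  set u := √(1 + s ^ 2 - 2 * m / s)
  set v := √(1 + s ^ 2)
  have hv : 0 < v := sqrt_pos.2 (by positivity)
  calc 2 * m * s / (u * v * (u + v)) ≤ 2 * m * s / (s * v * v) := by
        gcongr
        linarith [sqrt_nonneg (1 + s ^ 2 - 2 * m / s)]
    _ = 2 * m / (1 + s ^ 2) := by rw [← hv2]; field_simp

lemma abs_sAdSDensityExcess_sub_le {m s : ℝ} (hs : 2 * m ≤ s) (hspos : 0 < s) :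
    |sAdSDensityExcess m s - m * (s / ((1 + s ^ 2) * √(1 + s ^ 2)))| ≤ 4 * m ^ 2 / s ^ 5 := by
  have hsu := le_sqrt_sAdS_radicand hs hspos
  have hsv : s ≤ √(1 + s ^ 2) := le_sqrt_of_sq_le (by linarith)
  have hu2 : √(1 + s ^ 2 - 2 * m / s) ^ 2 = 1 + s ^ 2 - 2 * m / s :=
    sq_sqrt ((sq_nonneg s).trans (sq_le_sAdS_radicand hs hspos))
  have hv2 : √(1 + s ^ 2) ^ 2 = 1 + s ^ 2 := sq_sqrt (by positivity)
  rw [sAdSDensityExcess_eq hs hspos]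
  set u := √(1 + s ^ 2 - 2 * m / s)
  set v := √(1 + s ^ 2)
  rw [← hv2]
  have hu : 0 < u := hspos.trans_le hsu
  have hv : 0 < v := hspos.trans_le hsv
  have hm : m = s * (v ^ 2 - u ^ 2) / 2 := by
    rw [hu2, hv2]; field_simp; ring
  -- the first-order term cancels because `v - u = 2m / (s (u + v))`
  have hdiff : 2 * m * s / (u * v * (u + v)) - m * (s / (v ^ 2 * v))
      = 2 * m ^ 2 * (2 * v + u) / (u * v ^ 3 * (u + v) ^ 2) := by
    rw [hm]; field_simp; ring
  rw [hdiff, abs_of_nonneg (by positivity)]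
  calc 2 * m ^ 2 * (2 * v + u) / (u * v ^ 3 * (u + v) ^ 2)
      ≤ 2 * m ^ 2 * (2 * (u + v)) / (u * v ^ 3 * (u + v) ^ 2) := by gcongr; linarith
    _ = 4 * m ^ 2 / (u * v ^ 3 * (u + v)) := by field_simp; ring
    _ ≤ 4 * m ^ 2 / (s * s ^ 3 * s) := by gcongr; linarith
    _ = 4 * m ^ 2 / s ^ 5 := by ring

lemma continuousOn_sAdSDensityExcess {m : ℝ} (hm : 0 ≤ m) :
    ContinuousOn (sAdSDensityExcess m) (Ici (2 * m)) :=
  (continuousOn_sAdS_density hm).sub continuous_sq_div_sqrt_one_add_sq.continuousOn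

lemma integrableOn_sAdSDensityExcess {m : ℝ} (hm : 0 ≤ m) :
    IntegrableOn (sAdSDensityExcess m) (Ioi (2 * m)) := by
  refine Integrable.mono' (integrable_inv_one_add_sq.const_mul (2 * m)).integrableOn
    (((continuousOn_sAdSDensityExcess hm).mono Ioi_subset_Ici_self).aestronglyMeasurable
      measurableSet_Ioi) ?_
  filter_upwards [ae_restrict_mem measurableSet_Ioi] with s hs
  have hspos : 0 < s := lt_of_le_of_lt (by positivity) hs
  rw [norm_of_nonneg (sAdSDensityExcess_nonneg hm hs.le hspos), ← div_eq_mul_inv]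
  exact sAdSDensityExcess_le hm hs.le hspos

lemma sAdSVol_sub_hypVol {m R : ℝ} (hm : 0 ≤ m) (hR : 2 * m ≤ R) :
    sAdSVol m R - hypVol R = 4 * π * ((∫ s in (2 * m)..R, sAdSDensityExcess m s) -
      ∫ s in (0:ℝ)..(2 * m), s ^ 2 / √(1 + s ^ 2)) := by
  have hcont := continuous_sq_div_sqrt_one_add_sq
  have hIcc : uIcc (2 * m) R ⊆ Ici (2 * m) := by rw [uIcc_of_le hR]; exact Icc_subset_Ici_self
  unfold sAdSDensityExcess
  rw [sAdSVol, hypVol, ← intervalIntegral.integral_add_adjacent_intervals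
    (hcont.intervalIntegrable 0 (2 * m)) (hcont.intervalIntegrable (2 * m) R),
    intervalIntegral.integral_sub ((continuousOn_sAdS_density hm).mono hIcc).intervalIntegrable
      (hcont.intervalIntegrable _ _)]
  ring

lemma renormVol_eq {m : ℝ} (hm : 0 ≤ m) :
    renormVol m = 4 * π * ((∫ s in Ioi (2 * m), sAdSDensityExcess m s) -
      ∫ s in (0:ℝ)..(2 * m), s ^ 2 / √(1 + s ^ 2)) := by
  refine Tendsto.limUnder_eq (Tendsto.congr' ?_ (((intervalIntegral_tendsto_integral_Ioi _
    (integrableOn_sAdSDensityExcess hm) tendsto_id).sub_const _).const_mul (4 * π)))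
  filter_upwards [eventually_ge_atTop (2 * m)] with R hR
  exact (sAdSVol_sub_hypVol hm hR).symm

lemma sAdSVol_eq {m R : ℝ} (hm : 0 ≤ m) (hR : 2 * m ≤ R) :
    sAdSVol m R = hypVol R + renormVol m - 4 * π * ∫ s in Ioi R, sAdSDensityExcess m s := by
  have hint := integrableOn_sAdSDensityExcess hm
  have hsplit : ∫ s in Ioi (2 * m), sAdSDensityExcess m s
      = (∫ s in (2 * m)..R, sAdSDensityExcess m s) + ∫ s in Ioi R, sAdSDensityExcess m s := by
    rw [← Ioc_union_Ioi_eq_Ioi hR, setIntegral_union (Ioc_disjoint_Ioi le_rfl) measurableSet_Ioi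
      (hint.mono_set Ioc_subset_Ioi_self) (hint.mono_set (Ioi_subset_Ioi hR)),
      intervalIntegral.integral_of_le hR]
  linear_combination sAdSVol_sub_hypVol hm hR - renormVol_eq hm - 4 * π * hsplit

lemma hasDerivAt_neg_inv_sqrt_one_add_sq (x : ℝ) :
    HasDerivAt (fun s : ℝ => -(√(1 + s ^ 2))⁻¹) (x / ((1 + x ^ 2) * √(1 + x ^ 2))) x := by
  have hw : 0 < √(1 + x ^ 2) := sqrt_pos.2 (by positivity)
  refine ((hasDerivAt_sqrt_one_add_sq x).inv hw.ne').neg.congr_deriv ?_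
  rw [sq_sqrt (by positivity)]
  field_simp

lemma tendsto_neg_inv_sqrt_one_add_sq :
    Tendsto (fun s : ℝ => -(√(1 + s ^ 2))⁻¹) atTop (𝓝 0) := by
  have h : Tendsto (fun s : ℝ => √(1 + s ^ 2)) atTop atTop :=
    tendsto_atTop_mono (fun s => le_sqrt_of_sq_le (by simp)) tendsto_id
  simpa using h.inv_tendsto_atTop.neg

lemma integral_Ioi_div_one_add_sq_mul_sqrt {R : ℝ} (hR : 0 ≤ R) :
    ∫ s in Ioi R, s / ((1 + s ^ 2) * √(1 + s ^ 2)) = (√(1 + R ^ 2))⁻¹ := by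
  rw [integral_Ioi_of_hasDerivAt_of_nonneg' (fun x _ => hasDerivAt_neg_inv_sqrt_one_add_sq x)
    (fun x hx => by have := hR.trans_lt hx; positivity) tendsto_neg_inv_sqrt_one_add_sq]
  ring

lemma integrableOn_Ioi_div_one_add_sq_mul_sqrt {R : ℝ} (hR : 0 ≤ R) :
    IntegrableOn (fun s => s / ((1 + s ^ 2) * √(1 + s ^ 2))) (Ioi R) :=
  integrableOn_Ioi_deriv_of_nonneg' (fun x _ => hasDerivAt_neg_inv_sqrt_one_add_sq x)
    (fun x hx => by have := hR.trans_lt hx; positivity) tendsto_neg_inv_sqrt_one_add_sq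

lemma abs_integral_Ioi_sAdSDensityExcess_sub_le {m R : ℝ} (hm : 0 ≤ m) (hR : 0 < R)
    (h2m : 2 * m ≤ R) :
    |(∫ s in Ioi R, sAdSDensityExcess m s) - m / √(1 + R ^ 2)| ≤ m ^ 2 / R ^ 4 := by
  have hpow : ∀ s : ℝ, 0 < s → s ^ (-5 : ℝ) = (s ^ 5)⁻¹ := fun s hs => by
    rw [show (-5 : ℝ) = -(5 : ℕ) by norm_num, rpow_neg hs.le, rpow_natCast]
  have hmajorant : ∫ s in Ioi R, 4 * m ^ 2 * s ^ (-5 : ℝ) = m ^ 2 / R ^ 4 := by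
    rw [integral_const_mul, integral_Ioi_rpow_of_lt (by norm_num) hR,
      show (-5 : ℝ) + 1 = -(4 : ℕ) by norm_num, rpow_neg hR.le, rpow_natCast]
    field_simp
    ring
  rw [div_eq_mul_inv, ← integral_Ioi_div_one_add_sq_mul_sqrt hR.le, ← integral_const_mul,
    ← integral_sub ((integrableOn_sAdSDensityExcess hm).mono_set (Ioi_subset_Ioi h2m))
      ((integrableOn_Ioi_div_one_add_sq_mul_sqrt hR.le).const_mul m), ← hmajorant,
    ← norm_eq_abs]
  refine norm_integral_le_of_norm_le
    ((integrableOn_Ioi_rpow_of_lt (by norm_num : (-5 : ℝ) < -1) hR).const_mul _) ?_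
  filter_upwards [ae_restrict_mem measurableSet_Ioi] with s hs
  have hspos : 0 < s := hR.trans hs
  rw [norm_eq_abs, hpow s hspos, ← div_eq_mul_inv]
  exact abs_sAdSDensityExcess_sub_le (h2m.trans hs.le) hspos

lemma abs_sAdSVol_sub_le {m R : ℝ} (hm : 0 ≤ m) (hR : 0 < R) (h2m : 2 * m ≤ R) :
    |sAdSVol m R - (2 * π * R ^ 2 + π - 2 * π * log (2 * R) + renormVol m - 4 * π * m / R)|
      ≤ π * (3 / 4 + 2 * (m / R) + 4 * (m / R) ^ 2) / R ^ 2 := by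
  set w := √(1 + R ^ 2)
  have hsplit :
      sAdSVol m R - (2 * π * R ^ 2 + π - 2 * π * log (2 * R) + renormVol m - 4 * π * m / R)
      = (hypVol R - (2 * π * R ^ 2 + π - 2 * π * log (2 * R))) + 4 * π * m * (1 / R - 1 / w)
        - 4 * π * ((∫ s in Ioi R, sAdSDensityExcess m s) - m / w) := by
    rw [sAdSVol_eq hm h2m]; ring
  have hmass : |4 * π * m * (1 / R - 1 / w)| ≤ 4 * π * m * (1 / (2 * R ^ 3)) := by
    rw [abs_mul, abs_of_nonneg (by positivity)]
    exact mul_le_mul_of_nonneg_left (abs_inv_sub_inv_sqrt_one_add_sq_le hR) (by positivity)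
  have htail : |4 * π * ((∫ s in Ioi R, sAdSDensityExcess m s) - m / w)|
      ≤ 4 * π * (m ^ 2 / R ^ 4) := by
    rw [abs_mul, abs_of_pos (by positivity)]
    exact mul_le_mul_of_nonneg_left (abs_integral_Ioi_sAdSDensityExcess_sub_le hm hR h2m)
      (by positivity)
  rw [hsplit]
  calc _ ≤ |hypVol R - (2 * π * R ^ 2 + π - 2 * π * log (2 * R))|
        + |4 * π * m * (1 / R - 1 / w)|
        + |4 * π * ((∫ s in Ioi R, sAdSDensityExcess m s) - m / w)| :=
        (abs_sub _ _).trans (add_le_add_left (abs_add_le _ _) _)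
    _ ≤ 3 * π / (4 * R ^ 2) + 4 * π * m * (1 / (2 * R ^ 3)) + 4 * π * (m ^ 2 / R ^ 4) := by
        gcongr
        exact abs_hypVol_sub_le hR
    _ = π * (3 / 4 + 2 * (m / R) + 4 * (m / R) ^ 2) / R ^ 2 := by field_simp; ring

lemma rpow_one_half_four_pi_mul_sq {R : ℝ} (hR : 0 ≤ R) :
    (4 * π * R ^ 2) ^ ((1 : ℝ) / 2) = 2 * √π * R := by
  rw [← sqrt_eq_rpow, show 4 * π * R ^ 2 = (2 * √π * R) ^ 2 by
    rw [mul_pow, mul_pow, sq_sqrt pi_pos.le]; ring, sqrt_sq (by positivity)]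

lemma sAdS_area_expansion_eq (m V : ℝ) {R : ℝ} (hR : 0 < R) :
    (1 / 2) * (4 * π * R ^ 2) - π * log (4 * π * R ^ 2) + V + π * (1 + log π)
        - 8 * π ^ ((3 : ℝ) / 2) * m * (4 * π * R ^ 2) ^ (-(1 : ℝ) / 2)
      = 2 * π * R ^ 2 + π - 2 * π * log (2 * R) + V - 4 * π * m / R := by
  have hlog : log (4 * π * R ^ 2) = log π + 2 * log (2 * R) := by
    rw [show 4 * π * R ^ 2 = π * (2 * R) ^ 2 by ring, log_mul pi_pos.ne' (by positivity), log_pow]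
    norm_num
  have hpi : π ^ ((3 : ℝ) / 2) = π * √π := by
    rw [show (3 : ℝ) / 2 = 1 + 1 / 2 by norm_num, rpow_add pi_pos, rpow_one, sqrt_eq_rpow]
  have hrpow : (4 * π * R ^ 2) ^ (-(1 : ℝ) / 2) = (2 * √π * R)⁻¹ := by
    rw [show -(1 : ℝ) / 2 = -(1 / 2) by norm_num, rpow_neg (by positivity),
      rpow_one_half_four_pi_mul_sq hR.le]
  have hsqrt : 0 < √π := sqrt_pos.2 pi_pos
  rw [hlog, hpi, hrpow]
  field_simp
  ring

/-- uniform-in-mass expansion of the volume of the centered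
coordinate ball of boundary area `A` in Schwarzschild-anti-deSitter of mass
`m`, with error `C·A⁻¹` uniform over `0 ≤ m ≤ α√A`. -/
theorem sAdS_ball_volume_expansion_uniform (α : ℝ) (hα : 0 < α) :
    ∃ C > (0:ℝ), ∃ A₀ > (0:ℝ), ∀ m : ℝ, 0 ≤ m → ∀ A ≥ A₀,
      16 * π * m ^ 2 ≤ A → m ≤ α * A ^ ((1:ℝ)/2) →
      |sAdSVol m (Real.sqrt (A / (4 * π)))
          - ((1 / 2) * A - π * Real.log A + renormVol m + π * (1 + Real.log π)
              - 8 * π ^ ((3:ℝ)/2) * m * A ^ (-(1:ℝ)/2))|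
        ≤ C / A := by
  set κ := 2 * √π * α
  refine ⟨π ^ 2 * (3 + 8 * κ + 16 * κ ^ 2), by positivity, 1, one_pos, ?_⟩
  intro m hm A hA hmA hmα
  set R := √(A / (4 * π))
  have hAR : A = 4 * π * R ^ 2 := by
    rw [sq_sqrt (by positivity)]; field_simp
  have hR : 0 < R := sqrt_pos.2 (by positivity)
  have h2m : 2 * m ≤ R := le_sqrt_of_sq_le (by rw [le_div_iff₀ (by positivity)]; linarith)
  have hmR : m / R ≤ κ := by
    rw [div_le_iff₀ hR]
    rwa [hAR, rpow_one_half_four_pi_mul_sq hR.le, ← mul_assoc, mul_comm α] at hmα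
  rw [hAR, sAdS_area_expansion_eq m _ hR]
  calc _ ≤ π * (3 / 4 + 2 * (m / R) + 4 * (m / R) ^ 2) / R ^ 2 := abs_sAdSVol_sub_le hm hR h2m
    _ ≤ π * (3 / 4 + 2 * κ + 4 * κ ^ 2) / R ^ 2 := by gcongr
    _ = π ^ 2 * (3 + 8 * κ + 16 * κ ^ 2) / (4 * π * R ^ 2) := by field_simp; ring
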